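/- For all integers n ≥ k ≥ 1, the Bell polynomial of the second kind satisfies B_{n,k}(1/2, 1/3, …, 1/(n-k+2)) = (n!/(n+k)!) · ∑_{i=0}^{k} (-1)^{k-i} · C(n+k, k-i) · S(n+i, i), where S denotes the Stirling numbers of the second kind. -/

import Mathlib

open Finset

/-- Bell polynomials of the second kind: `bellB n k x` is
`B_{n,k}(x 1, x 2, …, x (n-k+1))`, summing over sequences of nonnegative
integers `ℓ 1, …` with `∑ i * ℓ i = n` and `∑ ℓ i = k`. -/
noncomputable def bellB (n k : ℕ) (x : ℕ → ℝ) : ℝ :=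
  ∑ ℓ : Fin (n + 1) → Fin (n + 1),
    if (ℓ 0 : ℕ) = 0 ∧ (∑ i : Fin (n + 1), (i : ℕ) * (ℓ i : ℕ)) = n ∧ (∑ i : Fin (n + 1), (ℓ i : ℕ)) = k then
      (n.factorial : ℝ) / (∏ i : Fin (n + 1), ((ℓ i : ℕ).factorial : ℝ)) *
        ∏ i : Fin (n + 1), (x (i : ℕ) / ((i : ℕ).factorial : ℝ)) ^ (ℓ i : ℕ)
    else 0

/-- Stirling numbers of the second kind (real-valued), with
`stirlingS 0 0 = 1` and `stirlingS n 0 = 0` for `n ≥ 1`. -/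
noncomputable def stirlingS (n k : ℕ) : ℝ :=
  (1 / (k.factorial : ℝ)) *
    ∑ l ∈ Finset.range (k + 1), (-1 : ℝ) ^ (k - l) * (k.choose l) * (l : ℝ) ^ n

/-!
Since `x i / i! = 1 / (i + 1)!` for `x i = 1 / (i + 1)`, the exponential generating series
`∑_{i ≥ 1} x i tⁱ / i!` of the arguments is `(eᵗ - 1 - t) / t`. By the multinomial theorem,
`B_{n,k}(x) = n!/k! · [tⁿ] (∑_{i ≥ 1} x i tⁱ / i!)ᵏ`, hence
`B_{n,k}(1/2, 1/3, …) = n!/k! · [t^{n+k}] (eᵗ - 1 - t)ᵏ`. Expanding `((eᵗ - 1) - t)ᵏ` binomially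
and using `[tᵐ] (eᵗ - 1)ⁱ = i! S(m, i) / m!` gives the sum, after
`n!/k! · C(k, i) i! / (n + i)! = n!/(n + k)! · C(n + k, k - i)`.
-/

namespace PowerSeries

variable {R : Type*} [CommSemiring R]

theorem coeff_pow_congr {f g : R⟦X⟧} {n : ℕ} (h : ∀ i ≤ n, coeff i f = coeff i g) (k : ℕ) :
    coeff n (f ^ k) = coeff n (g ^ k) := by
  have htrunc : trunc (n + 1) f = trunc (n + 1) g := by
    ext i
    simp only [coeff_trunc]
    split_ifs with hi
    exacts [h i (Nat.lt_succ_iff.mp hi), rfl]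
  rw [← coeff_coe_trunc_of_lt n.lt_succ_self, ← trunc_trunc_pow, htrunc, trunc_trunc_pow,
    coeff_coe_trunc_of_lt n.lt_succ_self]

theorem coeff_sum_monomial_pow {ι : Type*} [DecidableEq ι] (s : Finset ι) (e : ι → ℕ) (a : ι → R)
    (n k : ℕ) :
    coeff n ((∑ i ∈ s, monomial (e i) (a i)) ^ k) =
      ∑ g ∈ s.piAntidiag k with ∑ i ∈ s, g i * e i = n,
        (Nat.multinomial s g : R) * ∏ i ∈ s, a i ^ g i := by
  simp only [Finset.sum_pow_eq_sum_piAntidiag, monomial_pow, prod_monomial, map_sum,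
    ← map_natCast (C (R := R)), coeff_C_mul, coeff_monomial, Finset.sum_filter, mul_ite, mul_zero,
    eq_comm (a := n)]

end PowerSeries

open PowerSeries

theorem coeff_exp_sub_one_pow (m i : ℕ) :
    coeff m ((exp ℝ - 1) ^ i) = i.factorial * stirlingS m i / m.factorial := by
  have hi : (i.factorial : ℝ) ≠ 0 := by positivity
  rw [sub_eq_add_neg, add_pow, map_sum, stirlingS, ← mul_assoc, mul_one_div_cancel hi, one_mul,
    Finset.sum_div]
  refine Finset.sum_congr rfl fun l _ => ?_
  have hC : (-1) ^ (i - l) * (i.choose l : ℝ⟦X⟧) = C ((-1) ^ (i - l) * (i.choose l : ℝ)) := by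
    simp
  rw [exp_pow_eq_rescale_exp, neg_pow, one_pow, mul_one, mul_assoc, hC, mul_comm, coeff_C_mul,
    coeff_rescale, coeff_exp]
  simp only [map_div₀, map_one, map_natCast]
  ring

theorem coeff_exp_sub_one_sub_X_pow (n k : ℕ) :
    coeff (n + k) ((exp ℝ - 1 - X) ^ k) =
      ∑ i ∈ Finset.range (k + 1),
        (-1) ^ (k - i) * k.choose i * (i.factorial * stirlingS (n + i) i / (n + i).factorial) := by
  rw [sub_eq_add_neg _ X, add_pow, map_sum]
  refine Finset.sum_congr rfl fun i hi => ?_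
  have hik : i ≤ k := Nat.lt_succ_iff.mp (Finset.mem_range.mp hi)
  have hC : (-X) ^ (k - i) * (k.choose i : ℝ⟦X⟧) =
      C ((-1) ^ (k - i) * (k.choose i : ℝ)) * X ^ (k - i) := by
    simp only [neg_pow X, map_mul, map_pow, map_neg, map_one, map_natCast]
    ring
  rw [mul_assoc, hC, mul_left_comm, coeff_C_mul, coeff_mul_X_pow', if_pos (by omega),
    show n + k - (k - i) = n + i by omega, coeff_exp_sub_one_pow]

theorem bellB_eq_sum_piAntidiag (n k : ℕ) (x : ℕ → ℝ) :
    bellB n k x =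
      ∑ g ∈ (Finset.univ : Finset (Fin (n + 1))).piAntidiag k with
          ∑ i : Fin (n + 1), g i * (i : ℕ) = n ∧ g 0 = 0,
        (n.factorial : ℝ) / (∏ i : Fin (n + 1), ((g i).factorial : ℝ)) *
          ∏ i : Fin (n + 1), (x i / ((i : ℕ).factorial : ℝ)) ^ g i := by
  -- multiplicities of a partition of `n` into positive parts are `≤ n`, so fit in `Fin (n + 1)`
  have hle {g : Fin (n + 1) → ℕ} (hw : ∑ i : Fin (n + 1), g i * (i : ℕ) = n) (h0 : g 0 = 0)
      (j : Fin (n + 1)) : g j ≤ n := by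
    rcases eq_or_ne j 0 with rfl | hj
    · omega
    · calc g j ≤ g j * (j : ℕ) := Nat.le_mul_of_pos_right _ (Fin.pos_iff_ne_zero.mpr hj)
        _ ≤ ∑ i : Fin (n + 1), g i * (i : ℕ) :=
          Finset.single_le_sum (fun i _ => Nat.zero_le (g i * (i : ℕ))) (Finset.mem_univ j)
        _ = n := hw
  rw [bellB, ← Finset.sum_filter]
  refine Finset.sum_nbij' (fun ℓ i => ℓ i) (fun g i => ⟨min (g i) n, by omega⟩)
    ?_ ?_ ?_ ?_ ?_
  · intro ℓ hℓ
    simp only [Finset.mem_filter, Finset.mem_univ, true_and, Finset.mem_piAntidiag,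
      implies_true, and_true] at hℓ ⊢
    obtain ⟨h0, hw, hs⟩ := hℓ
    exact ⟨hs, by simpa only [mul_comm] using hw, h0⟩
  · intro g hg
    simp only [Finset.mem_filter, Finset.mem_univ, true_and, Finset.mem_piAntidiag,
      implies_true, and_true] at hg ⊢
    obtain ⟨hs, hw, h0⟩ := hg
    simp only [min_eq_left (hle hw h0 _)]
    exact ⟨h0, by simpa only [mul_comm] using hw, hs⟩
  · intro ℓ _
    funext i
    exact Fin.ext (min_eq_left (Nat.lt_succ_iff.mp (ℓ i).isLt))
  · intro g hg
    simp only [Finset.mem_filter, Finset.mem_piAntidiag] at hg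
    funext i
    exact min_eq_left (hle hg.2.1 hg.2.2 i)
  · intro ℓ _
    rfl

theorem bellB_eq_coeff_pow (n k : ℕ) (x : ℕ → ℝ) (A : ℝ⟦X⟧)
    (hA₀ : constantCoeff A = 0) (hA : ∀ i ≠ 0, coeff i A = x i / i.factorial) :
    bellB n k x = n.factorial / k.factorial * coeff n (A ^ k) := by
  have htrunc : ∀ i ≤ n, coeff i A = coeff i (∑ j : Fin (n + 1), monomial j (coeff j A)) := by
    intro i hi
    rw [Fin.sum_univ_eq_sum_range (fun j => monomial j (coeff j A)), map_sum]
    simp only [coeff_monomial, Finset.sum_ite_eq, Finset.mem_range, if_pos (Nat.lt_succ_of_le hi)]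
  have hvanish : ∀ g ∈ ((Finset.univ : Finset (Fin (n + 1))).piAntidiag k).filter
      (fun g => ∑ i : Fin (n + 1), g i * (i : ℕ) = n),
      (Nat.multinomial Finset.univ g : ℝ) * ∏ i : Fin (n + 1), coeff i A ^ g i ≠ 0 →
        g 0 = 0 := by
    intro g _ hg
    by_contra h0
    refine hg (mul_eq_zero_of_right _ (Finset.prod_eq_zero (Finset.mem_univ 0) ?_))
    rw [Fin.val_zero, coeff_zero_eq_constantCoeff_apply, hA₀, zero_pow h0]
  rw [coeff_pow_congr htrunc, coeff_sum_monomial_pow, ← Finset.sum_filter_of_ne hvanish,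
    Finset.filter_filter, bellB_eq_sum_piAntidiag, Finset.mul_sum]
  refine Finset.sum_congr rfl fun g hg => ?_
  simp only [Finset.mem_filter, Finset.mem_piAntidiag] at hg
  obtain ⟨⟨hs, -⟩, -, h0⟩ := hg
  have hmult :
      (Nat.multinomial Finset.univ g : ℝ) = k.factorial / ∏ i, ((g i).factorial : ℝ) := by
    rw [eq_div_iff (by positivity), mul_comm]
    exact_mod_cast hs ▸ Nat.multinomial_spec Finset.univ g
  have hprod : ∏ i : Fin (n + 1), coeff i A ^ g i =
      ∏ i : Fin (n + 1), (x i / ((i : ℕ).factorial : ℝ)) ^ g i := by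
    refine Finset.prod_congr rfl fun i _ => ?_
    rcases eq_or_ne i 0 with rfl | hi
    · rw [h0, pow_zero, pow_zero]
    · rw [hA i (Fin.val_ne_zero_iff.mpr hi)]
  rw [hmult, hprod]
  field_simp

theorem X_mul_mk_inv_factorial_succ :
    X * PowerSeries.mk (fun i => if i = 0 then 0 else ((i + 1).factorial : ℝ)⁻¹) =
      exp ℝ - 1 - X := by
  ext (_ | _ | m)
  · simp
  · simp
  · simp [coeff_succ_X_mul, coeff_exp, coeff_X, coeff_one]

theorem bellB_one_div_succ_eq_coeff (n k : ℕ) :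
    bellB n k (fun i => 1 / ((i : ℝ) + 1)) =
      n.factorial / k.factorial * coeff (n + k) ((exp ℝ - 1 - X) ^ k) := by
  rw [← X_mul_mk_inv_factorial_succ, mul_pow, coeff_X_pow_mul]
  refine bellB_eq_coeff_pow n k _ _ (by simp) fun i hi => ?_
  rw [coeff_mk, if_neg hi, Nat.factorial_succ]
  field_simp
  push_cast
  ring

theorem stmt_1_general (n k : ℕ) :
    bellB n k (fun i => 1 / ((i : ℝ) + 1)) =
      ((n.factorial : ℝ) / ((n + k).factorial : ℝ)) *
        ∑ i ∈ Finset.range (k + 1),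
          (-1 : ℝ) ^ (k - i) * ((n + k).choose (k - i)) * stirlingS (n + i) i := by
  rw [bellB_one_div_succ_eq_coeff, coeff_exp_sub_one_sub_X_pow, Finset.mul_sum, Finset.mul_sum]
  refine Finset.sum_congr rfl fun i hi => ?_
  have hik : i ≤ k := Nat.lt_succ_iff.mp (Finset.mem_range.mp hi)
  rw [Nat.cast_choose ℝ hik, Nat.cast_choose ℝ (by omega : k - i ≤ n + k),
    show n + k - (k - i) = n + i by omega]
  field_simp

theorem stmt_1 (n k : ℕ) (hk : 1 ≤ k) (hkn : k ≤ n) :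
    bellB n k (fun i => 1 / ((i : ℝ) + 1)) =
      ((n.factorial : ℝ) / ((n + k).factorial : ℝ)) *
        ∑ i ∈ Finset.range (k + 1),
          (-1 : ℝ) ^ (k - i) * ((n + k).choose (k - i)) * stirlingS (n + i) i :=
  stmt_1_general n k
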